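/- Let d ≥ 3 and χ be integers with χ ≥ 1 − g(d), and let v = (a_1, …, a_d) be a balanced spectrum of type (d, χ) with a_i ≤ −2 for some i. If 2·h⁰(v) = 2 + χ + d(d−3)/2, then either χ = 1 − g(d) and a_i = 1 − i for all i, or χ = g(d) − 1 and a_i = d − 2 − i for all i. -/

import Mathlib

open Finset

/-- A spectrum of type `(d, χ)`: a nonincreasing `d`-tuple of integers with
entry sum `χ - d`. -/
def IsSpectrum (d : ℕ) (χ : ℤ) (a : Fin d → ℤ) : Prop :=
  Antitone a ∧ ∑ i, a i = χ - (d : ℤ)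

/-- Balanced: consecutive entries drop by at most 1. -/
def IsBalanced {d : ℕ} (a : Fin d → ℤ) : Prop :=
  ∀ (i : Fin d) (h : (i : ℕ) + 1 < d), a i - a ⟨(i : ℕ) + 1, h⟩ ≤ 1

/-- `h⁰` of a spectrum: `Σ_{a_i ≥ 0} (a_i + 1)`. -/
def h0 {d : ℕ} (a : Fin d → ℤ) : ℤ :=
  ∑ i, if 0 ≤ a i then a i + 1 else 0

/-- Arithmetic genus of a degree `d` plane curve: `(d-1)(d-2)/2`. -/
def gd (d : ℤ) : ℤ := (d - 1) * (d - 2) / 2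

/-! Termwise, `2 h⁰(v) = Σ |a_i + 1| + χ`, so the hypothesis says `Σ |a_i + 1| = g(d) + 1`.
The lower bound on `χ` forces a nonnegative entry, so by balancedness some `a_p = -1`, with
`1 ≤ p ≤ d - 2` because `a_0 ≥ 0` and `a_{d-1} ≤ -2`. A balanced nonincreasing spectrum is
1-Lipschitz in the index, hence
`Σ |a_i + 1| ≤ Σ |p - i| = g(d) + 1 + (p - 1)(p - (d - 2)) ≤ g(d) + 1`.
Equality forces `p ∈ {1, d - 2}` and `a_i = p - 1 - i` for every `i`. -/

lemma two_mul_gd (d : ℤ) : 2 * gd d = (d - 1) * (d - 2) :=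
  Int.two_mul_ediv_two_of_even <| by
    simpa only [sub_sub, one_add_one_eq_two] using Int.even_mul_pred_self (d - 1)

lemma mul_sub_three_ediv_two (d : ℤ) : d * (d - 3) / 2 = gd d - 1 := by
  rw [gd, show (d - 1) * (d - 2) = d * (d - 3) + 2 * 1 by ring,
    Int.add_mul_ediv_left _ _ two_ne_zero, add_sub_cancel_right]

lemma two_mul_sum_range_cast (n : ℕ) : 2 * ∑ i ∈ range n, (i : ℤ) = n * (n - 1) := by
  induction n with
  | zero => simp
  | succ n ih => rw [sum_range_succ, mul_add, ih]; push_cast; ring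

lemma two_mul_sum_range_abs_sub {p n : ℕ} (hpn : p ≤ n) :
    2 * ∑ i ∈ range n, |(p : ℤ) - i| = p * (p + 1) + ((n : ℤ) - 1 - p) * (n - p) := by
  induction n, hpn using Nat.le_induction with
  | base =>
    rw [sum_congr rfl fun i hi => abs_of_nonneg (by simp at hi; omega), sum_sub_distrib,
      mul_sub, two_mul_sum_range_cast, sum_const, card_range, nsmul_eq_mul]
    ring
  | succ n hpn ih =>
    rw [sum_range_succ, mul_add, ih, abs_of_nonpos (by omega)]
    push_cast
    ring

lemma two_mul_sum_fin_abs_sub {n : ℕ} (p : Fin n) :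
    2 * ∑ i : Fin n, |(p : ℤ) - i| = p * (p + 1) + ((n : ℤ) - 1 - p) * (n - p) := by
  rw [Fin.sum_univ_eq_sum_range (fun i => |(p : ℤ) - i|),
    two_mul_sum_range_abs_sub p.is_le']

lemma two_mul_sum_fin_sub {n : ℕ} (c : ℤ) :
    2 * ∑ i : Fin n, (c - i) = 2 * n * c - n * (n - 1) := by
  rw [Fin.sum_univ_eq_sum_range (fun i => c - i), sum_sub_distrib, mul_sub,
    two_mul_sum_range_cast, sum_const, card_range, nsmul_eq_mul]
  ring

lemma two_mul_h0 {d : ℕ} (a : Fin d → ℤ) : 2 * h0 a = ∑ i, |a i + 1| + ∑ i, a i + d := by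
  have key (x : ℤ) : 2 * (if 0 ≤ x then x + 1 else 0) = |x + 1| + x + 1 := by
    split_ifs with hx
    · rw [abs_of_nonneg (by omega)]; ring
    · rw [abs_of_nonpos (by omega)]; ring
  simp only [h0, mul_sum, key, sum_add_distrib, sum_const, card_univ, Fintype.card_fin,
    nsmul_eq_mul, mul_one]

lemma Antitone.sub_eq_of_abs_sub_eq {n : ℕ} {f : Fin n → ℤ} (hf : Antitone f) {i j : Fin n}
    (h : |f i - f j| = |(j : ℤ) - i|) : f i - f j = j - i := by
  rcases le_total i j with hle | hle
  · have hij : (i : ℤ) ≤ j := by exact_mod_cast hle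
    rwa [abs_of_nonneg (sub_nonneg.2 (hf hle)), abs_of_nonneg (sub_nonneg.2 hij)] at h
  · have hji : (j : ℤ) ≤ i := by exact_mod_cast hle
    rwa [abs_of_nonpos (sub_nonpos.2 (hf hle)), abs_of_nonpos (sub_nonpos.2 hji), neg_inj] at h

namespace IsBalanced

variable {d : ℕ} {a : Fin d → ℤ}

lemma sub_le (hb : IsBalanced a) {i j : Fin d} (hij : i ≤ j) : a i - a j ≤ (j : ℤ) - i := by
  suffices ∀ m, (i : ℕ) ≤ m → ∀ hm : m < d, a i - a ⟨m, hm⟩ ≤ (m : ℤ) - i from this j hij j.2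
  intro m him
  induction m, him using Nat.le_induction with
  | base => simp
  | succ m _ ih =>
    intro hm
    have := hb ⟨m, by omega⟩ hm
    have := ih (by omega)
    push_cast
    linarith

lemma exists_eq (hb : IsBalanced a) {c : ℤ} {i j : Fin d} (hij : i ≤ j)
    (hi : c ≤ a i) (hj : a j ≤ c) : ∃ p, a p = c := by
  suffices ∀ m, (i : ℕ) ≤ m → ∀ hm : m < d, a ⟨m, hm⟩ ≤ c → ∃ p, a p = c from this j hij j.2 hj
  intro m him
  induction m, him using Nat.le_induction with
  | base => exact fun _ hm => ⟨i, le_antisymm hm hi⟩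
  | succ m _ ih =>
    intro hm hmc
    by_cases hm' : a ⟨m, by omega⟩ ≤ c
    · exact ih (by omega) hm'
    · have : a ⟨m, by omega⟩ - a ⟨m + 1, hm⟩ ≤ 1 := hb ⟨m, by omega⟩ hm
      exact ⟨⟨m + 1, hm⟩, le_antisymm hmc (by omega)⟩

lemma abs_sub_le (hb : IsBalanced a) (ha : Antitone a) (i j : Fin d) :
    |a i - a j| ≤ |(j : ℤ) - i| := by
  rcases le_total i j with h | h
  · have hij : (i : ℤ) ≤ j := by exact_mod_cast h
    exact abs_le_abs (hb.sub_le h) (by linarith [ha h])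
  · have hji : (j : ℤ) ≤ i := by exact_mod_cast h
    rw [abs_sub_comm, abs_sub_comm (j : ℤ)]
    exact abs_le_abs (hb.sub_le h) (by linarith [ha h])

lemma sum_abs_add_one_le (hb : IsBalanced a) (ha : Antitone a) {p : Fin d} (hp : a p = -1) :
    ∑ i, |a i + 1| ≤ ∑ i : Fin d, |(p : ℤ) - i| :=
  sum_le_sum fun i _ => by simpa [hp] using hb.abs_sub_le ha i p

lemma eq_of_sum_abs_add_one_eq (hb : IsBalanced a) (ha : Antitone a) {p : Fin d}
    (hp : a p = -1) (h : ∑ i, |a i + 1| = ∑ i : Fin d, |(p : ℤ) - i|) (i : Fin d) :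
    a i = p - 1 - i := by
  have hi := (sum_eq_sum_iff_of_le fun i _ => by simpa [hp] using hb.abs_sub_le ha i p).1 h i
    (mem_univ i)
  have := ha.sub_eq_of_abs_sub_eq (i := i) (j := p) (by simpa [hp] using hi)
  linarith

end IsBalanced

theorem stmt_14_general (d : ℕ) (χ : ℤ) (hχ : 1 - gd (d : ℤ) ≤ χ)
    (a : Fin d → ℤ) (hs : IsSpectrum d χ a) (hb : IsBalanced a)
    (hneg : ∃ i, a i ≤ -2)
    (heq : 2 * h0 a = 2 + χ + (d : ℤ) * ((d : ℤ) - 3) / 2) :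
    (χ = 1 - gd (d : ℤ) ∧ ∀ i : Fin d, a i = -((i : ℕ) : ℤ)) ∨
    (χ = gd (d : ℤ) - 1 ∧ ∀ i : Fin d, a i = (d : ℤ) - 3 - ((i : ℕ) : ℤ)) := by
  obtain ⟨ha, hsum⟩ := hs
  obtain ⟨m, hm⟩ := hneg
  rw [mul_sub_three_ediv_two] at heq
  have hg := two_mul_gd d
  obtain ⟨j, hj⟩ : ∃ j, 0 ≤ a j := by
    by_contra! hall
    have : h0 a = 0 := sum_eq_zero fun i _ => if_neg (hall i).not_ge
    linarith
  obtain ⟨p, hp⟩ := hb.exists_eq (c := -1) (ha.reflect_lt (by linarith : a m < a j)).le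
    (by linarith) (by linarith)
  have hjp : (j : ℤ) < p := by exact_mod_cast ha.reflect_lt (by linarith : a p < a j)
  have hpm : (p : ℤ) < m := by exact_mod_cast ha.reflect_lt (by linarith : a m < a p)
  have hmd : (m : ℤ) < d := by exact_mod_cast m.2
  have hS : ∑ i, |a i + 1| = gd d + 1 := by linarith [two_mul_h0 a]
  have hle := hb.sum_abs_add_one_le ha hp
  have hgap :
      2 * ∑ i : Fin d, |(p : ℤ) - i| = 2 * (gd d + 1) + 2 * ((p - 1) * (p - (d - 2))) := by
    linear_combination two_mul_sum_fin_abs_sub p - hg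
  have hp' : ((p : ℤ) - 1) * (p - (d - 2)) = 0 :=
    le_antisymm (mul_nonpos_of_nonneg_of_nonpos (by omega) (by omega)) (by linarith)
  have hall := hb.eq_of_sum_abs_add_one_eq ha hp (by linarith)
  have hχsum : 2 * χ = 2 * d * (p - 1) - d * (d - 1) + 2 * d := by
    rw [← two_mul_sum_fin_sub, ← sum_congr rfl fun i _ => hall i]
    linarith
  rcases mul_eq_zero.1 hp' with hp_one | hp_top
  · refine .inl ⟨by nlinarith, fun i => ?_⟩
    linarith [hall i]
  · refine .inr ⟨by nlinarith, fun i => ?_⟩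
    linarith [hall i]

/-- equality in the Clifford bound forces the spectrum
`(0, -1, …, 1-d)` with `χ = 1 - g(d)` or `(d-3, d-4, …, -2)` with `χ = g(d) - 1`. -/
theorem stmt_14 (d : ℕ) (χ : ℤ) (hd : 3 ≤ d) (hχ : 1 - gd (d : ℤ) ≤ χ)
    (a : Fin d → ℤ) (hs : IsSpectrum d χ a) (hb : IsBalanced a)
    (hneg : ∃ i, a i ≤ -2)
    (heq : 2 * h0 a = 2 + χ + (d : ℤ) * ((d : ℤ) - 3) / 2) :
    (χ = 1 - gd (d : ℤ) ∧ ∀ i : Fin d, a i = -((i : ℕ) : ℤ)) ∨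
    (χ = gd (d : ℤ) - 1 ∧ ∀ i : Fin d, a i = (d : ℤ) - 3 - ((i : ℕ) : ℤ)) :=
  stmt_14_general d χ hχ a hs hb hneg heq
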